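/- Fix integers n, j, m ≥ 1 with j ≤ n, a composition (n_1,…,n_j) of n into j positive parts, a real α < 1, and real weights V(n,k) with V(n,j) ≠ 0. Let r_1,…,r_m be nonnegative integers with R = ∑_{l=1}^{m} l·r_l ≤ m; put ρ = ∑_{l=1}^{m} r_l. Then the joint falling factorial moments of the conditional Gibbs sampling formula satisfy: ∑ [∏_{l=1}^{m} (w_l)_{[r_l]}]·Q(w) = (m!·∏_{l=1}^{m} [(1−α)_{l−1}]^{r_l}/((m−R)!·∏_{l=1}^{m}(l!)^{r_l}))·(1/V(n,j))·∑_{k=ρ}^{ρ+m−R} V(n+m,j+k)·S(m−R, k−ρ; α, −(n−jα)), where the outer sum ranges over all tuples (w_1,…,w_m) of nonnegative integers with ∑_{l=1}^{m} l·w_l ≤ m. -/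

import Mathlib

/-- Rising factorial `(x)_n = x(x+1)⋯(x+n−1)`. -/
noncomputable def risingFac (x : ℝ) (n : ℕ) : ℝ := ∏ i ∈ Finset.range n, (x + i)

/-- Rising factorial with increment `α`: `(x)_{n↑α} = ∏_{i<n} (x + iα)`. -/
noncomputable def risingFacInc (x α : ℝ) (n : ℕ) : ℝ := ∏ i ∈ Finset.range n, (x + i * α)

/-- Falling factorial `(x)_{[n]} = x(x−1)⋯(x−n+1)`. -/
noncomputable def fallingFac (x : ℝ) (n : ℕ) : ℝ := ∏ i ∈ Finset.range n, (x - i)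

/-- Compositions of `n` into `k` positive parts, as functions `Fin k → ℕ`. -/
def compositions (n k : ℕ) : Finset (Fin k → ℕ) :=
  (Fintype.piFinset fun _ => Finset.range (n + 1)).filter
    (fun f => (∀ i, 0 < f i) ∧ ∑ i, f i = n)

/-- Tuples of `k` nonnegative integers summing to `n`. -/
def weakCompositions (n k : ℕ) : Finset (Fin k → ℕ) :=
  (Fintype.piFinset fun _ => Finset.range (n + 1)).filter (fun f => ∑ i, f i = n)

/-- Generalized (central) Stirling number
`S(n,k;α) = (n!/k!) ∑_{(n_1,…,n_k)} ∏_j (1−α)_{n_j−1}/n_j!`,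
the sum over compositions of `n` into `k` positive parts. -/
noncomputable def genStirling (α : ℝ) (n k : ℕ) : ℝ :=
  (Nat.factorial n : ℝ) / (Nat.factorial k : ℝ) *
    ∑ f ∈ compositions n k, ∏ j, risingFac (1 - α) (f j - 1) / (Nat.factorial (f j) : ℝ)

/-- Non-central generalized Stirling number
`S(n,k;α,γ) = ∑_{s=k}^n C(n,s) S(s,k;α) (−γ)_{n−s}`. -/
noncomputable def genStirlingNC (α γ : ℝ) (n k : ℕ) : ℝ :=
  ∑ s ∈ Finset.Icc k n, (n.choose s : ℝ) * genStirling α s k * risingFac (-γ) (n - s)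

/-- Vectors `(w_1,…,w_m)` of nonnegative integers with `∑ i·w_i ≤ m`,
encoded as `w : Fin m → ℕ` where index `i` represents size `i+1`. -/
def condCountVectors (m : ℕ) : Finset (Fin m → ℕ) :=
  (Fintype.piFinset fun _ => Finset.range (m + 1)).filter
    (fun w => ∑ i, (i.1 + 1) * w i ≤ m)

/-- The conditional Gibbs sampling formula
`Q(w) = m!·(V(n+m,j+k)/V(n,j))·((n−jα)_{m−s}/(m−s)!)·
∏_i [(1−α)_{i−1}]^{w_i}/((i!)^{w_i} w_i!)`, where `s = ∑ i·w_i` and `k = ∑ w_i`. -/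
noncomputable def condSampling (α : ℝ) (V : ℕ → ℕ → ℝ) (n j m : ℕ)
    (w : Fin m → ℕ) : ℝ :=
  (Nat.factorial m : ℝ) * (V (n + m) (j + ∑ i, w i) / V n j) *
    (risingFac ((n : ℝ) - j * α) (m - ∑ i, (i.1 + 1) * w i) /
      (Nat.factorial (m - ∑ i, (i.1 + 1) * w i) : ℝ)) *
    ∏ i, (risingFac (1 - α) i.1) ^ (w i) /
      ((Nat.factorial (i.1 + 1) : ℝ) ^ (w i) * (Nat.factorial (w i) : ℝ))


/-!
Since `(w)_{[r]} / w! = 1 / (w - r)!`, only `w ≥ r` contribute to the moment, and the shift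
`w = r + v` splits off the factor `∏ ((1-α)_{l-1} / l!)^{r_l}`, leaving a Gibbs-type sum over
multiplicity vectors `v` of total size at most `m - R`. Grouping these by their number of blocks
`κ` and total size `s`, the inner sums `∑_v ∏_l c_l^{v_l} / v_l!` with `c_l = (1-α)_{l-1} / l!`
are `S(s,κ;α) / s!`: by the multinomial theorem both are the coefficient of `X^s` in
`(∑_l c_l X^l)^κ / κ!`. What remains is the binomial convolution defining `S(m-R, k-ρ; α, γ)`.
-/

open Finset

lemma mem_compositions {n k : ℕ} {f : Fin k → ℕ} :
    f ∈ compositions n k ↔ (∀ i, 0 < f i) ∧ ∑ i, f i = n := by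
  simp only [compositions, mem_filter, Fintype.mem_piFinset, mem_range, and_iff_right_iff_imp]
  rintro ⟨-, rfl⟩ i
  exact Nat.lt_succ_of_le (single_le_sum (fun _ _ => Nat.zero_le _) (mem_univ i))

lemma le_of_mem_compositions {n k : ℕ} {f : Fin k → ℕ} (hf : f ∈ compositions n k)
    (i : Fin k) : f i ≤ n := by
  simp only [compositions, mem_filter, Fintype.mem_piFinset, mem_range] at hf
  exact Nat.le_of_lt_succ (hf.1 i)

/-- Multiplicity vectors of the partitions of `s` into `κ` blocks of sizes at most `m`. -/
def countVectors (m κ s : ℕ) : Finset (Fin m → ℕ) :=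
  (univ.piAntidiag κ).filter fun v => ∑ l, (l.1 + 1) * v l = s

lemma mem_countVectors {m κ s : ℕ} {v : Fin m → ℕ} :
    v ∈ countVectors m κ s ↔ ∑ l, v l = κ ∧ ∑ l, (l.1 + 1) * v l = s := by
  simp [countVectors]

open Polynomial in
lemma sum_countVectors_multinomial {R : Type*} [CommSemiring R] (c : ℕ → R) {m κ s : ℕ}
    (hs : s ≤ m) :
    ∑ v ∈ countVectors m κ s, (Nat.multinomial univ v : R) * ∏ l, c (l.1 + 1) ^ v l =
      ∑ f ∈ compositions s κ, ∏ i, c (f i) := by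
  set P : R[X] := ∑ l : Fin m, C (c (l.1 + 1)) * X ^ (l.1 + 1)
  have h_multinomial : (P ^ κ).coeff s =
      ∑ v ∈ countVectors m κ s, (Nat.multinomial univ v : R) * ∏ l, c (l.1 + 1) ^ v l := by
    simp only [P, sum_pow_eq_sum_piAntidiag, finsetSum_coeff, countVectors, sum_filter]
    refine sum_congr rfl fun v _ => ?_
    have h_monomial : ∏ l : Fin m, (C (c (l.1 + 1)) * X ^ (l.1 + 1)) ^ v l =
        C (∏ l, c (l.1 + 1) ^ v l) * X ^ (∑ l, (l.1 + 1) * v l) := by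
      simp [mul_pow, prod_mul_distrib, ← pow_mul, prod_pow_eq_pow_sum]
    rw [h_monomial, ← C_eq_natCast, ← mul_assoc, ← C_mul, coeff_C_mul_X_pow]
    exact if_congr eq_comm rfl rfl
  have h_product : (P ^ κ).coeff s =
      ∑ g : Fin κ → Fin m with ∑ i, ((g i).1 + 1) = s, ∏ i, c ((g i).1 + 1) := by
    rw [← Fin.prod_const, prod_univ_sum, finsetSum_coeff, sum_filter]
    refine sum_congr rfl fun g _ => ?_
    simp [prod_mul_distrib, prod_pow_eq_pow_sum, ← map_prod, eq_comm]
  rw [← h_multinomial, h_product]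
  -- `s ≤ m` makes every part of a composition of `s` one of the sizes `1, …, m` indexed by `Fin m`
  refine sum_bij (fun g _ i => (g i).1 + 1) ?_ ?_ ?_ fun _ _ => rfl
  · intro g hg
    simp only [mem_filter, mem_univ, true_and] at hg
    exact mem_compositions.2 ⟨fun i => Nat.succ_pos _, hg⟩
  · intro g _ g' _ h
    funext i
    exact Fin.ext (by simpa using congrFun h i)
  · intro f hf
    obtain ⟨hpos, hsum⟩ := mem_compositions.1 hf
    refine ⟨fun i => ⟨f i - 1, by have := le_of_mem_compositions hf i; have := hpos i; omega⟩,
      ?_, funext fun i => Nat.sub_add_cancel (hpos i)⟩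
    simp only [mem_filter, mem_univ, true_and]
    rw [← hsum]
    exact sum_congr rfl fun i _ => Nat.sub_add_cancel (hpos i)

lemma sum_countVectors_eq_genStirling (α : ℝ) {m κ s : ℕ} (hs : s ≤ m) :
    ∑ v ∈ countVectors m κ s,
        ∏ l : Fin m, (risingFac (1 - α) l.1 / (l.1 + 1).factorial) ^ v l / (v l).factorial =
      genStirling α s κ / s.factorial := by
  rw [genStirling,
    ← sum_countVectors_multinomial (fun t => risingFac (1 - α) (t - 1) / t.factorial) hs,
    mul_div_right_comm, div_div_cancel_left' (by positivity), mul_sum]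
  refine sum_congr rfl fun v hv => ?_
  have h_spec : (∏ l, ((v l).factorial : ℝ)) * Nat.multinomial univ v = κ.factorial := by
    rw [← (mem_countVectors.1 hv).1]
    exact_mod_cast Nat.multinomial_spec univ v
  simp only [Nat.add_sub_cancel, prod_div_distrib]
  field_simp
  rw [← h_spec]
  ring

def boundedCountVectors (m N : ℕ) : Finset (Fin m → ℕ) :=
  (Fintype.piFinset fun _ => range (N + 1)).filter fun v => ∑ l, (l.1 + 1) * v l ≤ N

lemma condCountVectors_eq_boundedCountVectors (m : ℕ) :
    condCountVectors m = boundedCountVectors m m := rfl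

lemma le_sum_succ_mul {m : ℕ} (v : Fin m → ℕ) (l : Fin m) : v l ≤ ∑ i, (i.1 + 1) * v i :=
  (Nat.le_mul_of_pos_left _ l.1.succ_pos).trans
    (single_le_sum (f := fun i : Fin m => (i.1 + 1) * v i) (fun _ _ => Nat.zero_le _) (mem_univ l))

lemma sum_le_sum_succ_mul {m : ℕ} (v : Fin m → ℕ) : ∑ l, v l ≤ ∑ l, (l.1 + 1) * v l :=
  sum_le_sum fun l _ => Nat.le_mul_of_pos_left _ l.1.succ_pos

lemma sum_succ_mul_add {m : ℕ} (r v : Fin m → ℕ) :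
    ∑ l, (l.1 + 1) * (r + v) l = ∑ l, (l.1 + 1) * r l + ∑ l, (l.1 + 1) * v l := by
  simp only [Pi.add_apply, mul_add, sum_add_distrib]

lemma mem_boundedCountVectors {m N : ℕ} {v : Fin m → ℕ} :
    v ∈ boundedCountVectors m N ↔ ∑ l, (l.1 + 1) * v l ≤ N := by
  simp only [boundedCountVectors, mem_filter, Fintype.mem_piFinset, mem_range,
    and_iff_right_iff_imp]
  exact fun h l => Nat.lt_succ_of_le ((le_sum_succ_mul v l).trans h)

lemma sum_boundedCountVectors_eq_sum_countVectors {β : Type*} [AddCommMonoid β]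
    (m N : ℕ) (H : (Fin m → ℕ) → β) :
    ∑ v ∈ boundedCountVectors m N, H v =
      ∑ κ ∈ range (N + 1), ∑ s ∈ Icc κ N, ∑ v ∈ countVectors m κ s, H v := by
  rw [← sum_fiberwise_of_maps_to (g := fun v => ∑ l, v l) (t := range (N + 1))]
  swap
  · intro v hv
    exact mem_range_succ_iff.2 ((sum_le_sum_succ_mul v).trans (mem_boundedCountVectors.1 hv))
  refine sum_congr rfl fun κ _ => ?_
  rw [← sum_fiberwise_of_maps_to (g := fun v => ∑ l, (l.1 + 1) * v l) (t := Icc κ N)]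
  swap
  · intro v hv
    simp only [mem_filter, mem_boundedCountVectors] at hv
    exact mem_Icc.2 ⟨hv.2 ▸ sum_le_sum_succ_mul v, hv.1⟩
  refine sum_congr rfl fun s hs => sum_congr ?_ fun _ _ => rfl
  ext v
  simp only [mem_filter, mem_boundedCountVectors, mem_countVectors, mem_Icc] at hs ⊢
  constructor
  · exact fun h => ⟨h.1.2, h.2⟩
  · exact fun h => ⟨⟨h.2 ▸ hs.2, h.1⟩, h.2⟩

lemma sum_boundedCountVectors_eq_sum_add {β : Type*} [AddCommMonoid β] {m N : ℕ}
    (r : Fin m → ℕ) (hr : ∑ l, (l.1 + 1) * r l ≤ N) (F : (Fin m → ℕ) → β)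
    (hF : ∀ w, ¬ r ≤ w → F w = 0) :
    ∑ w ∈ boundedCountVectors m N, F w =
      ∑ v ∈ boundedCountVectors m (N - ∑ l, (l.1 + 1) * r l), F (r + v) := by
  refine Eq.trans ?_ (sum_map _ (addLeftEmbedding r) F)
  symm
  refine sum_subset (fun w hw => ?_) fun w hw hw' => hF w fun hrw => hw' ?_
  · obtain ⟨v, hv, rfl⟩ := mem_map.1 hw
    rw [mem_boundedCountVectors] at hv ⊢
    simp only [addLeftEmbedding_apply, sum_succ_mul_add]
    omega
  · refine mem_map.2 ⟨w - r, mem_boundedCountVectors.2 ?_, add_tsub_cancel_of_le hrw⟩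
    have h_size := sum_succ_mul_add r (w - r)
    rw [add_tsub_cancel_of_le hrw] at h_size
    have := mem_boundedCountVectors.1 hw
    omega

lemma sum_boundedCountVectors_mul_eq_genStirling (α : ℝ) {m N : ℕ} (hN : N ≤ m)
    (G : ℕ → ℕ → ℝ) :
    ∑ v ∈ boundedCountVectors m N, G (∑ l, v l) (∑ l, (l.1 + 1) * v l) *
        ∏ l : Fin m, (risingFac (1 - α) l.1 / (l.1 + 1).factorial) ^ v l / (v l).factorial =
      ∑ κ ∈ range (N + 1), ∑ s ∈ Icc κ N, G κ s * (genStirling α s κ / s.factorial) := by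
  rw [sum_boundedCountVectors_eq_sum_countVectors]
  refine sum_congr rfl fun κ _ => sum_congr rfl fun s hs => ?_
  rw [← sum_countVectors_eq_genStirling α ((mem_Icc.1 hs).2.trans hN), mul_sum]
  refine sum_congr rfl fun v hv => ?_
  rw [(mem_countVectors.1 hv).1, (mem_countVectors.1 hv).2]

lemma sum_Icc_mul_genStirlingNC (α γ : ℝ) (ρ N : ℕ) (f : ℕ → ℝ) :
    ∑ k ∈ Icc ρ (ρ + N), f k * genStirlingNC α γ N (k - ρ) =
      ∑ κ ∈ range (N + 1), ∑ s ∈ Icc κ N,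
        f (ρ + κ) * (N.choose s * genStirling α s κ * risingFac (-γ) (N - s)) := by
  rw [← Ico_add_one_right_eq_Icc, sum_Ico_eq_sum_range, add_assoc, Nat.add_sub_cancel_left]
  simp only [genStirlingNC, Nat.add_sub_cancel_left, mul_sum]

lemma fallingFac_natCast (N k : ℕ) : fallingFac N k = N.descFactorial k := by
  rw [fallingFac, ← descPochhammer_eval_eq_prod_range, descPochhammer_eval_eq_descFactorial]

lemma fallingFac_mul_condSampling_add (α : ℝ) (V : ℕ → ℕ → ℝ) (n j : ℕ) {m : ℕ}
    (r v : Fin m → ℕ) :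
    (∏ l, fallingFac ((r + v) l : ℝ) (r l)) * condSampling α V n j m (r + v) =
      m.factorial / V n j *
        (∏ l : Fin m, (risingFac (1 - α) l.1 / (l.1 + 1).factorial) ^ r l) *
        (V (n + m) (j + (∑ l, r l + ∑ l, v l)) *
          (risingFac (n - j * α) (m - ∑ l, (l.1 + 1) * r l - ∑ l, (l.1 + 1) * v l) /
            (m - ∑ l, (l.1 + 1) * r l - ∑ l, (l.1 + 1) * v l).factorial) *
          ∏ l : Fin m, (risingFac (1 - α) l.1 / (l.1 + 1).factorial) ^ v l / (v l).factorial) := by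
  have h_coord : ∀ l : Fin m, fallingFac ((r l + v l : ℕ) : ℝ) (r l) *
      ((risingFac (1 - α) l.1) ^ (r l + v l) /
        (((l.1 + 1).factorial : ℝ) ^ (r l + v l) * (r l + v l).factorial)) =
      (risingFac (1 - α) l.1 / (l.1 + 1).factorial) ^ r l *
        ((risingFac (1 - α) l.1 / (l.1 + 1).factorial) ^ v l / (v l).factorial) := by
    intro l
    have h_desc : ((v l).factorial : ℝ) * (r l + v l).descFactorial (r l) =
        (r l + v l).factorial := by
      have := Nat.factorial_mul_descFactorial (Nat.le_add_right (r l) (v l))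
      rw [Nat.add_sub_cancel_left] at this
      exact_mod_cast this
    simp only [fallingFac_natCast, div_pow, pow_add]
    rw [← h_desc]
    field_simp
  rw [condSampling, sum_succ_mul_add, ← Nat.sub_sub]
  simp only [Pi.add_apply, sum_add_distrib]
  calc _ = m.factorial / V n j * V (n + m) (j + (∑ l, r l + ∑ l, v l)) *
          (risingFac (n - j * α) (m - ∑ l, (l.1 + 1) * r l - ∑ l, (l.1 + 1) * v l) /
            (m - ∑ l, (l.1 + 1) * r l - ∑ l, (l.1 + 1) * v l).factorial) *
          ∏ l : Fin m, fallingFac ((r l + v l : ℕ) : ℝ) (r l) *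
            ((risingFac (1 - α) l.1) ^ (r l + v l) /
              (((l.1 + 1).factorial : ℝ) ^ (r l + v l) * (r l + v l).factorial)) := by
        rw [prod_mul_distrib]
        ring
    _ = _ := by
        simp only [h_coord, prod_mul_distrib]
        ring

theorem condSampling_joint_fallingFactorial_moments_general (n j m : ℕ)
    (α : ℝ) (V : ℕ → ℕ → ℝ)
    (r : Fin m → ℕ) (hR : ∑ l, (l.1 + 1) * r l ≤ m) :
    ∑ w ∈ condCountVectors m,
        (∏ l, fallingFac (w l : ℝ) (r l)) * condSampling α V n j m w =
      (Nat.factorial m : ℝ) * (∏ l, (risingFac (1 - α) l.1) ^ (r l)) /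
          ((Nat.factorial (m - ∑ l, (l.1 + 1) * r l) : ℝ) *
            ∏ l, (Nat.factorial (l.1 + 1) : ℝ) ^ (r l)) *
        (1 / V n j) *
        ∑ k ∈ Finset.Icc (∑ l, r l) (∑ l, r l + (m - ∑ l, (l.1 + 1) * r l)),
          V (n + m) (j + k) *
            genStirlingNC α (-((n : ℝ) - j * α)) (m - ∑ l, (l.1 + 1) * r l)
              (k - ∑ l, r l) := by
  have h_vanish : ∀ w, ¬ r ≤ w →
      (∏ l, fallingFac (w l : ℝ) (r l)) * condSampling α V n j m w = 0 := by
    intro w hw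
    obtain ⟨l, hl⟩ : ∃ l, w l < r l := by simpa [Pi.le_def] using hw
    rw [prod_eq_zero (mem_univ l)
      (by simp [fallingFac_natCast, Nat.descFactorial_eq_zero_iff_lt, hl]), zero_mul]
  rw [condCountVectors_eq_boundedCountVectors, sum_boundedCountVectors_eq_sum_add r hR _ h_vanish]
  simp only [fallingFac_mul_condSampling_add]
  rw [← mul_sum, sum_boundedCountVectors_mul_eq_genStirling α (Nat.sub_le _ _)
      fun κ s => V (n + m) (j + (∑ l, r l + κ)) *
        (risingFac (n - j * α) (m - ∑ l, (l.1 + 1) * r l - s) /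
          (m - ∑ l, (l.1 + 1) * r l - s).factorial),
    sum_Icc_mul_genStirlingNC, neg_neg]
  simp only [mul_sum]
  refine sum_congr rfl fun κ _ => sum_congr rfl fun s hs => ?_
  rw [Nat.cast_choose ℝ (mem_Icc.1 hs).2]
  simp only [div_pow, prod_div_distrib]
  field_simp

/-- Joint falling factorial moments of the conditional Gibbs sampling formula. -/
theorem condSampling_joint_fallingFactorial_moments (n j m : ℕ)
    (hn : 1 ≤ n) (hj : 1 ≤ j) (hm : 1 ≤ m) (hjn : j ≤ n)
    (nv : Fin j → ℕ) (hnv : ∀ i, 0 < nv i) (hsum : ∑ i, nv i = n)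
    (α : ℝ) (hα : α < 1) (V : ℕ → ℕ → ℝ) (hV : V n j ≠ 0)
    (r : Fin m → ℕ) (hR : ∑ l, (l.1 + 1) * r l ≤ m) :
    ∑ w ∈ condCountVectors m,
        (∏ l, fallingFac (w l : ℝ) (r l)) * condSampling α V n j m w =
      (Nat.factorial m : ℝ) * (∏ l, (risingFac (1 - α) l.1) ^ (r l)) /
          ((Nat.factorial (m - ∑ l, (l.1 + 1) * r l) : ℝ) *
            ∏ l, (Nat.factorial (l.1 + 1) : ℝ) ^ (r l)) *
        (1 / V n j) *
        ∑ k ∈ Finset.Icc (∑ l, r l) (∑ l, r l + (m - ∑ l, (l.1 + 1) * r l)),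
          V (n + m) (j + k) *
            genStirlingNC α (-((n : ℝ) - j * α)) (m - ∑ l, (l.1 + 1) * r l)
              (k - ∑ l, r l) :=
  condSampling_joint_fallingFactorial_moments_general n j m α V r hR
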